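/- Let X ~ N(μ, σ²) and, independently, ε ~ N(0, τ²), with σ, τ > 0. Then the density of Y = max(X, 0) + ε at a point u decomposes as p_Y(u) = Φ(−μ/σ) φ(u; 0, τ²) + φ(u; μ, σ² + τ²) Φ(μ_*/σ_*), where μ_* = (uσ² + μτ²)/(σ² + τ²) and σ_*² = σ²τ²/(σ² + τ²). -/

import Mathlib

open MeasureTheory Real ProbabilityTheory

noncomputable def stdPdf (x : ℝ) : ℝ := (Real.sqrt (2 * π))⁻¹ * Real.exp (-x ^ 2 / 2)
noncomputable def stdCdf (x : ℝ) : ℝ := ∫ t in Set.Iic x, stdPdf t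
noncomputable def gaussPdf (m v x : ℝ) : ℝ :=
  (Real.sqrt (2 * π * v))⁻¹ * Real.exp (-(x - m) ^ 2 / (2 * v))

/-! The variables `max X 0` and `ε` are independent, so the law of `Y` is the convolution of the
law of `max X 0` with `N(0, τ²)`, which has density `u ↦ ∫ φ(u; max x 0, τ²) dN(μ, σ²)(x)`.
On `{x < 0}` the integrand is the constant `φ(u; 0, τ²)`, which contributes `Φ(-μ/σ) φ(u; 0, τ²)`.
On `{x ≥ 0}`, completing the square in `x` gives
`φ(x; μ, σ²) φ(u; x, τ²) = φ(u; μ, σ² + τ²) φ(x; μ⋆, σ⋆²)`, and integrating the last factor over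
`[0, ∞)` gives `Φ(μ⋆/σ⋆)`. -/

open Set

lemma gaussPdf_nonneg (m v x : ℝ) : 0 ≤ gaussPdf m v x := by
  unfold gaussPdf; positivity

lemma stdCdf_nonneg (x : ℝ) : 0 ≤ stdCdf x :=
  integral_nonneg fun t => by unfold stdPdf; positivity

@[fun_prop]
lemma Measurable.gaussPdf {α : Type*} [MeasurableSpace α] {m v x : α → ℝ} (hm : Measurable m)
    (hv : Measurable v) (hx : Measurable x) : Measurable fun a => gaussPdf (m a) (v a) (x a) := by
  unfold _root_.gaussPdf; fun_prop

lemma ofReal_gaussPdf (m : ℝ) {v : ℝ} (hv : 0 ≤ v) (x : ℝ) :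
    ENNReal.ofReal (gaussPdf m v x) = gaussianPDF m v.toNNReal x := by
  simp [gaussianPDF, gaussianPDFReal, gaussPdf, Real.coe_toNNReal _ hv]

lemma gaussianReal_eq_withDensity_gaussPdf (m : ℝ) {v : ℝ} (hv : 0 < v) :
    gaussianReal m v.toNNReal = volume.withDensity (fun x => ENNReal.ofReal (gaussPdf m v x)) := by
  simp_rw [ofReal_gaussPdf m hv.le]
  exact gaussianReal_of_var_ne_zero m (Real.toNNReal_pos.mpr hv).ne'

lemma ofReal_stdCdf (x : ℝ) : ENNReal.ofReal (stdCdf x) = gaussianReal 0 1 (Iic x) := by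
  rw [gaussianReal_apply_eq_integral _ one_ne_zero]
  simp [stdCdf, stdPdf, gaussianPDFReal]

lemma gaussianReal_Iic (m : ℝ) {v : ℝ} (hv : 0 < v) (a : ℝ) :
    gaussianReal m v.toNNReal (Iic a) = ENNReal.ofReal (stdCdf ((a - m) / √v)) := by
  have hsqrt : 0 < √v := Real.sqrt_pos.mpr hv
  have hstd : (gaussianReal m v.toNNReal).map (fun x => (x - m) / √v) = gaussianReal 0 1 := by
    rw [show (fun x => (x - m) / √v) = (· / √v) ∘ (· - m) from rfl,
      ← Measure.map_map (by fun_prop) (by fun_prop), gaussianReal_map_sub_const,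
      gaussianReal_map_div_const, sub_self, zero_div]
    congr 1
    ext
    simp [Real.sq_sqrt hv.le, Real.coe_toNNReal _ hv.le, hv.ne']
  rw [ofReal_stdCdf, ← hstd, Measure.map_apply (by fun_prop) measurableSet_Iic]
  congr 1
  ext x
  simp [div_le_div_iff_of_pos_right hsqrt]

lemma gaussianReal_Iio (m : ℝ) {v : ℝ} (hv : 0 < v) (a : ℝ) :
    gaussianReal m v.toNNReal (Iio a) = ENNReal.ofReal (stdCdf ((a - m) / √v)) := by
  have := nullSingletonClass_gaussianReal (μ := m) (Real.toNNReal_pos.mpr hv).ne'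
  rw [measure_congr Iio_ae_eq_Iic, gaussianReal_Iic m hv]

lemma gaussianReal_Ici (m : ℝ) {v : ℝ} (hv : 0 < v) (a : ℝ) :
    gaussianReal m v.toNNReal (Ici a) = ENNReal.ofReal (stdCdf ((m - a) / √v)) := by
  rw [← neg_sub_neg, ← gaussianReal_Iic (-m) hv, ← gaussianReal_map_neg,
    Measure.map_apply measurable_neg measurableSet_Iic]
  congr 1
  ext x
  simp

lemma gaussPdf_mul_gaussPdf {s t : ℝ} (hs : 0 < s) (ht : 0 < t) (m u x : ℝ) :
    gaussPdf m s x * gaussPdf x t u =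
      gaussPdf m (s + t) u * gaussPdf ((u * s + m * t) / (s + t)) (s * t / (s + t)) x := by
  have hnorm : √(2 * π * s) * √(2 * π * t) =
      √(2 * π * (s + t)) * √(2 * π * (s * t / (s + t))) := by
    rw [← Real.sqrt_mul (by positivity), ← Real.sqrt_mul (by positivity)]
    congr 1
    field_simp
  have hexp : -(x - m) ^ 2 / (2 * s) + -(u - x) ^ 2 / (2 * t) =
      -(u - m) ^ 2 / (2 * (s + t)) +
        -(x - (u * s + m * t) / (s + t)) ^ 2 / (2 * (s * t / (s + t))) := by
    field_simp
    ring
  unfold gaussPdf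
  rw [mul_mul_mul_comm, ← Real.exp_add, hexp, Real.exp_add, ← mul_inv, hnorm, mul_inv]
  ring

lemma conv_gaussianReal_eq_withDensity (ν : Measure ℝ) [SFinite ν] {v : ℝ} (hv : 0 < v) :
    ν ∗ gaussianReal 0 v.toNNReal =
      volume.withDensity (fun u => ∫⁻ x, ENNReal.ofReal (gaussPdf x v u) ∂ν) := by
  ext s hs
  have hadd : Measurable fun p : ℝ × ℝ => p.1 + p.2 := by fun_prop
  have hshift (x : ℝ) : gaussianReal 0 v.toNNReal (Prod.mk x ⁻¹' ((fun p => p.1 + p.2) ⁻¹' s)) =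
      ∫⁻ u in s, ENNReal.ofReal (gaussPdf x v u) := by
    rw [show Prod.mk x ⁻¹' ((fun p : ℝ × ℝ => p.1 + p.2) ⁻¹' s) = (x + ·) ⁻¹' s from rfl,
      ← Measure.map_apply (by fun_prop) hs, gaussianReal_map_const_add, zero_add,
      gaussianReal_eq_withDensity_gaussPdf x hv, withDensity_apply _ hs]
  rw [Measure.conv, Measure.map_apply hadd hs, Measure.prod_apply (hadd hs),
    withDensity_apply _ hs]
  simp_rw [hshift]
  exact lintegral_lintegral_swap (by fun_prop)

lemma setLIntegral_Ici_gaussPdf {s t : ℝ} (hs : 0 < s) (ht : 0 < t) (m u a : ℝ) :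
    ∫⁻ x in Ici a, ENNReal.ofReal (gaussPdf x t u) ∂gaussianReal m s.toNNReal =
      ENNReal.ofReal (gaussPdf m (s + t) u *
        stdCdf (((u * s + m * t) / (s + t) - a) / √(s * t / (s + t)))) := by
  set m' := (u * s + m * t) / (s + t)
  set v' := s * t / (s + t)
  have hv' : 0 < v' := by positivity
  calc ∫⁻ x in Ici a, ENNReal.ofReal (gaussPdf x t u) ∂gaussianReal m s.toNNReal
      = ∫⁻ x in Ici a, ENNReal.ofReal (gaussPdf m (s + t) u) *
          ENNReal.ofReal (gaussPdf m' v' x) := by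
        rw [gaussianReal_eq_withDensity_gaussPdf m hs,
          setLIntegral_withDensity_eq_setLIntegral_mul _ (by fun_prop)
            (by fun_prop) measurableSet_Ici]
        refine setLIntegral_congr_fun measurableSet_Ici fun x _ => ?_
        rw [Pi.mul_apply, ← ENNReal.ofReal_mul (gaussPdf_nonneg _ _ _),
          gaussPdf_mul_gaussPdf hs ht, ENNReal.ofReal_mul (gaussPdf_nonneg _ _ _)]
    _ = ENNReal.ofReal (gaussPdf m (s + t) u) * gaussianReal m' v'.toNNReal (Ici a) := by
        rw [lintegral_const_mul _ (by fun_prop),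
          gaussianReal_eq_withDensity_gaussPdf m' hv', withDensity_apply _ measurableSet_Ici]
    _ = _ := by
        rw [gaussianReal_Ici m' hv', ← ENNReal.ofReal_mul (gaussPdf_nonneg _ _ _)]

lemma lintegral_gaussPdf_max_zero {s t : ℝ} (hs : 0 < s) (ht : 0 < t) (m u : ℝ) :
    ∫⁻ x, ENNReal.ofReal (gaussPdf (max x 0) t u) ∂gaussianReal m s.toNNReal =
      ENNReal.ofReal (stdCdf (-m / √s) * gaussPdf 0 t u +
        gaussPdf m (s + t) u * stdCdf ((u * s + m * t) / (s + t) / √(s * t / (s + t)))) := by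
  have hflat : ∫⁻ x in Iio 0, ENNReal.ofReal (gaussPdf (max x 0) t u) ∂gaussianReal m s.toNNReal =
      ENNReal.ofReal (stdCdf (-m / √s) * gaussPdf 0 t u) := by
    rw [setLIntegral_congr_fun measurableSet_Iio fun x (hx : x < 0) => by rw [max_eq_right hx.le],
      setLIntegral_const, gaussianReal_Iio m hs, zero_sub, mul_comm,
      ENNReal.ofReal_mul (stdCdf_nonneg _)]
  have hlinear : ∫⁻ x in Ici 0, ENNReal.ofReal (gaussPdf (max x 0) t u) ∂gaussianReal m s.toNNReal =
      ENNReal.ofReal (gaussPdf m (s + t) u *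
        stdCdf ((u * s + m * t) / (s + t) / √(s * t / (s + t)))) := by
    rw [setLIntegral_congr_fun measurableSet_Ici fun x (hx : 0 ≤ x) => by rw [max_eq_left hx],
      setLIntegral_Ici_gaussPdf hs ht, sub_zero]
  rw [← lintegral_add_compl _ measurableSet_Iio, compl_Iio, hflat, hlinear,
    ENNReal.ofReal_add (mul_nonneg (stdCdf_nonneg _) (gaussPdf_nonneg _ _ _))
      (mul_nonneg (gaussPdf_nonneg _ _ _) (stdCdf_nonneg _))]

theorem relu_output_density_general {Ω : Type*} [MeasurableSpace Ω] (P : Measure Ω)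
    [IsProbabilityMeasure P] (X ε : Ω → ℝ)
    (μ σ τ : ℝ) (hσ : 0 < σ) (hτ : 0 < τ)
    (hXlaw : P.map X = gaussianReal μ (Real.toNNReal (σ ^ 2)))
    (hεlaw : P.map ε = gaussianReal 0 (Real.toNNReal (τ ^ 2)))
    (hindep : IndepFun X ε P) :
    P.map (fun ω => max (X ω) 0 + ε ω) =
      volume.withDensity (fun u => ENNReal.ofReal
        (stdCdf (-μ / σ) * gaussPdf 0 (τ ^ 2) u +
          gaussPdf μ (σ ^ 2 + τ ^ 2) u *
            stdCdf (((u * σ ^ 2 + μ * τ ^ 2) / (σ ^ 2 + τ ^ 2)) /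
              Real.sqrt (σ ^ 2 * τ ^ 2 / (σ ^ 2 + τ ^ 2))))) := by
  have hXm : AEMeasurable X P := .of_map_ne_zero (hXlaw ▸ IsProbabilityMeasure.ne_zero _)
  have hεm : AEMeasurable ε P := .of_map_ne_zero (hεlaw ▸ IsProbabilityMeasure.ne_zero _)
  have hrelu : P.map (fun ω => max (X ω) 0) = (gaussianReal μ (σ ^ 2).toNNReal).map (max · 0) := by
    rw [← hXlaw, AEMeasurable.map_map_of_aemeasurable (by fun_prop) hXm]
    rfl
  calc P.map (fun ω => max (X ω) 0 + ε ω)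
      = P.map (fun ω => max (X ω) 0) ∗ P.map ε :=
        (hindep.comp (measurable_id.max measurable_const) measurable_id).map_add_eq_map_conv_map₀
          (by fun_prop) hεm
    _ = _ := by
      rw [hrelu, hεlaw, conv_gaussianReal_eq_withDensity _ (by positivity)]
      congr 1
      funext u
      rw [lintegral_map (by fun_prop) (by fun_prop),
        lintegral_gaussPdf_max_zero (by positivity) (by positivity), Real.sqrt_sq hσ.le]

/-- Density of `Y = max(X, 0) + ε` for independent `X ∼ N(μ, σ²)` and `ε ∼ N(0, τ²)`:
`p_Y(u) = Φ(−μ/σ) φ(u; 0, τ²) + φ(u; μ, σ² + τ²) Φ(μ⋆(u)/σ⋆)`, where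
`μ⋆(u) = (uσ² + μτ²)/(σ² + τ²)` and `σ⋆² = σ²τ²/(σ² + τ²)`. -/
theorem relu_output_density {Ω : Type*} [MeasurableSpace Ω] (P : Measure Ω)
    [IsProbabilityMeasure P] (X ε : Ω → ℝ) (hX : Measurable X) (hε : Measurable ε)
    (μ σ τ : ℝ) (hσ : 0 < σ) (hτ : 0 < τ)
    (hXlaw : P.map X = gaussianReal μ (Real.toNNReal (σ ^ 2)))
    (hεlaw : P.map ε = gaussianReal 0 (Real.toNNReal (τ ^ 2)))
    (hindep : IndepFun X ε P) :
    P.map (fun ω => max (X ω) 0 + ε ω) =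
      volume.withDensity (fun u => ENNReal.ofReal
        (stdCdf (-μ / σ) * gaussPdf 0 (τ ^ 2) u +
          gaussPdf μ (σ ^ 2 + τ ^ 2) u *
            stdCdf (((u * σ ^ 2 + μ * τ ^ 2) / (σ ^ 2 + τ ^ 2)) /
              Real.sqrt (σ ^ 2 * τ ^ 2 / (σ ^ 2 + τ ^ 2))))) :=
  relu_output_density_general P X ε μ σ τ hσ hτ hXlaw hεlaw hindep
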